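/- Let T be a decorated tree and let [P, Q] be its image under the bijection I to synchronized intervals. For every free leaf ℓ of T, the initial segment of P produced by the traversal just after visiting ℓ is a Dyck path (i.e., it is balanced). Consequently, the free leaves of T are in one-to-one correspondence with the non-initial contacts of P, so fl(T) = cont([P,Q]). -/

import Mathlib

/-- Rooted plane trees with integer labels on the leaves. -/
inductive DTree where
  | leaf : ℤ → DTree
  | node : List DTree → DTree

mutual
/-- The list of leaf labels of a tree, in left-to-right (prefix traversal) order. -/
def leafLabels : DTree → List ℤ
  | .leaf l => [l]
  | .node ts => leafLabelsList ts
def leafLabelsList : List DTree → List ℤ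
  | [] => []
  | t :: ts => leafLabels t ++ leafLabelsList ts
end

/-- The three conditions of decorated trees, for a subtree whose root is at depth `d`:
leaf labels are at least -1 and strictly less than the depth of their parent;
every internal node of positive depth `d` has a descendant leaf labeled at most `d - 2`;
and in any direct subtree of an internal node of depth `d`, a leaf labeled `d` is
preceded in traversal order only by leaves labeled at least `d`. -/
inductive DecoAt : DTree → ℕ → Prop where
  | leaf {l : ℤ} {d : ℕ} (h1 : -1 ≤ l) (h2 : l < (d : ℤ) - 1) : DecoAt (.leaf l) d
  | node {ts : List DTree} {d : ℕ} (hne : ts ≠ [])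
      (h2 : 0 < d → ∃ x ∈ leafLabelsList ts, x ≤ (d : ℤ) - 2)
      (h3 : ∀ t' ∈ ts, ∀ a b, leafLabels t' = a ++ (d : ℤ) :: b → ∀ x ∈ a, (d : ℤ) ≤ x)
      (h4 : ∀ t' ∈ ts, DecoAt t' (d + 1)) : DecoAt (.node ts) d

/-- A decorated tree: the root is at depth 0. -/
def IsDeco (T : DTree) : Prop := DecoAt T 0

/-- The number of free leaves (leaves labeled -1). -/
def fl (T : DTree) : ℕ := (leafLabels T).count (-1)

mutual
/-- Increment leaf labels, where the counter `m` is the number of free leaves (from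
the left) that still must be incremented; once it reaches 0, remaining free leaves
are left untouched. Returns the new tree and the remaining counter. -/
def incUpTo : DTree → ℕ → DTree × ℕ
  | .leaf l, m =>
      if l = -1 then (if 0 < m then (.leaf 0, m - 1) else (.leaf (-1), m))
      else (.leaf (l + 1), m)
  | .node ts, m =>
      let p := incList ts m
      (.node p.1, p.2)
def incList : List DTree → ℕ → List DTree × ℕ
  | [], m => ([], m)
  | t :: ts, m =>
      let p := incUpTo t m
      let q := incList ts p.2
      (p.1 :: q.1, q.2)
end

/-- Δ_T(T,i): attach `T` under a new root vertex and add 1 to every leaf label,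
except for the last `i` free leaves (in traversal order). -/
def deltaT (T : DTree) (i : ℕ) : DTree := .node [(incUpTo T (fl T - i)).1]

mutual
/-- Subtract 1 from every non-free leaf label. -/
def decLeaves : DTree → DTree
  | .leaf l => if l = -1 then .leaf (-1) else .leaf (l - 1)
  | .node ts => .node (decList ts)
def decList : List DTree → List DTree
  | [] => []
  | t :: ts => decLeaves t :: decList ts
end

/-- Π_T: remove the root (which has a unique child) and subtract 1 from every
non-free leaf label. -/
def piT : DTree → DTree
  | .node [t] => decLeaves t
  | t => t

mutual
/-- The upper path `Q` of the image of a decorated tree under the bijection `I`: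
the Dyck path recording the depth variation of the counterclockwise depth-first
traversal of the tree (`u = true` going down an edge, `d = false` going up). -/
def qbody : DTree → List Bool
  | .leaf _ => []
  | .node ts => qlist ts
def qlist : List DTree → List Bool
  | [] => []
  | t :: ts => (true :: (qbody t ++ [false])) ++ qlist ts
end

def qpath : DTree → List Bool
  | .leaf _ => []
  | .node ts => qlist ts

/-- Prepend an up step (for the edge leading to an internal node) to the first block. -/
def consU : List (List Bool × Bool) → List (List Bool × Bool)
  | [] => []
  | (w, f) :: rest => (true :: w, f) :: rest

mutual
/-- Construction of the lower path `P` of the image under `I`, decomposed into one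
block per leaf (in traversal order): the traversal appends `u` for each newly
explored edge and `d^(c(ℓ)+1)` upon reaching a leaf `ℓ`, where `c(ℓ)` is the number
of non-root internal nodes whose certificate (first descendant leaf in traversal
order with label at most depth − 2) is `ℓ`. The state is the list of pending
thresholds `p − 2` of internal nodes of depth `p` still awaiting their certificate;
a leaf labeled `l` certifies exactly the pending nodes with threshold at least `l`.
Each block is paired with a Boolean telling whether its leaf is free. -/
def pb : DTree → ℕ → List ℤ → List (List Bool × Bool) × List ℤ
  | .leaf l, _, D =>
      ([(true :: List.replicate ((D.filter (fun p => l ≤ p)).length + 1) false,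
          decide (l = -1))],
       D.filter (fun p => ¬ l ≤ p))
  | .node ts, d, D =>
      let r := pbList ts (d + 1) (((d : ℤ) - 2) :: D)
      (consU r.1, r.2)
def pbList : List DTree → ℕ → List ℤ → List (List Bool × Bool) × List ℤ
  | [], _, D => ([], D)
  | t :: ts, d, D =>
      let a := pb t d D
      let b := pbList ts d a.2
      (a.1 ++ b.1, b.2)
end

/-- The per-leaf blocks of the lower path of `I(T)`. -/
def blocks : DTree → List (List Bool × Bool)
  | .leaf _ => []
  | .node ts => (pbList ts 1 []).1

/-- The lower path `P` of the image of a decorated tree under the bijection `I`. -/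
def ppath (T : DTree) : List Bool := ((blocks T).map Prod.fst).flatten

/-- The number of non-initial contacts of a path: the number of nonempty balanced
prefixes. -/
def ncontacts (w : List Bool) : ℕ :=
  ((List.range w.length).filter
    (fun j => (w.take (j + 1)).count true = (w.take (j + 1)).count false)).length

/-!
While `P` is built, the internal nodes still waiting for their certificate form a stack; the node
of depth `p` waits with threshold `p - 2`, and a leaf labelled `l` certifies the waiting nodes with
threshold `≥ l`. After the block of a leaf the height of `P` is the number of nodes still waiting,
and inside the block it does not go lower, so `P` returns to the axis exactly at the end of the
block of a leaf that certifies every waiting node. A free leaf does. A leaf labelled `l ≥ 0` does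
not: its ancestor `v` at depth `l + 1` waits with threshold `l - 1 < l`, and by condition 3 at the
parent of `v` every earlier leaf below `v` is labelled `≥ l`, so `v` is still waiting.
-/

def excess (w : List Bool) : ℤ := w.count true - w.count false

@[simp]
lemma excess_nil : excess [] = 0 := rfl

@[simp]
lemma excess_append (v w : List Bool) : excess (v ++ w) = excess v + excess w := by
  simp only [excess, List.count_append]; push_cast; ring

@[simp]
lemma excess_cons_true (w : List Bool) : excess (true :: w) = 1 + excess w := by
  simp [excess]; ring

lemma excess_eq_zero_iff (w : List Bool) : excess w = 0 ↔ w.count true = w.count false := by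
  simp only [excess]; omega

@[simp]
lemma excess_replicate_false (n : ℕ) : excess (List.replicate n false) = -n := by
  simp [excess, List.count_replicate]

lemma excess_take_true_replicate_false (j m : ℕ) (hj : j ≤ m) :
    excess ((true :: List.replicate m false).take (j + 1)) = 1 - j := by
  rw [List.take_succ_cons, List.take_replicate, excess_cons_true, excess_replicate_false,
    min_eq_left (by omega)]
  ring

lemma ncontacts_eq_card {w : List Bool} {S : Finset ℕ} (hS : ∀ n ∈ S, 0 < n ∧ n ≤ w.length)
    (h : ∀ n, 0 < n → n ≤ w.length → (excess (w.take n) = 0 ↔ n ∈ S)) :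
    ncontacts w = S.card := by
  set P := fun j => decide ((w.take (j + 1)).count true = (w.take (j + 1)).count false)
  have hnodup : (((List.range w.length).filter P).map Nat.succ).Nodup :=
    (List.nodup_range.filter _).map Nat.succ_injective
  rw [ncontacts, ← List.length_map Nat.succ, ← List.toFinset_card_of_nodup hnodup]
  congr 1
  ext n
  simp only [List.mem_toFinset, List.mem_map, List.mem_filter, List.mem_range, P,
    decide_eq_true_eq, ← excess_eq_zero_iff]
  constructor
  · rintro ⟨j, ⟨hj, hP⟩, rfl⟩
    exact (h (j + 1) j.succ_pos hj).1 hP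
  · intro hn
    obtain ⟨hpos, hle⟩ := hS n hn
    exact ⟨n - 1, ⟨by omega, by rwa [Nat.sub_add_cancel hpos, h n hpos hle]⟩, by omega⟩

namespace Blocks

def flat (B : List (List Bool × Bool)) : List Bool := (B.map Prod.fst).flatten

@[simp]
lemma flat_nil : flat [] = [] := rfl

@[simp]
lemma flat_cons (b : List Bool × Bool) (B : List (List Bool × Bool)) :
    flat (b :: B) = b.1 ++ flat B := rfl

@[simp]
lemma flat_append (A B : List (List Bool × Bool)) : flat (A ++ B) = flat A ++ flat B := by
  simp [flat]

/-- Positions at which the blocks flagged `true` end in `flat B`. -/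
def freeEnds : List (List Bool × Bool) → Finset ℕ
  | [] => ∅
  | (w, f) :: B => (if f then {w.length} else ∅) ∪ (freeEnds B).map (addRightEmbedding w.length)

variable {A B : List (List Bool × Bool)}

lemma mem_freeEnds_cons {w : List Bool} {f : Bool} {n : ℕ} :
    n ∈ freeEnds ((w, f) :: B) ↔ (f = true ∧ n = w.length) ∨ ∃ m ∈ freeEnds B, n = m + w.length := by
  cases f <;> simp [freeEnds, eq_comm]

lemma le_length_of_mem_freeEnds {n : ℕ} (h : n ∈ freeEnds B) : n ≤ (flat B).length := by
  induction B generalizing n with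
  | nil => simp [freeEnds] at h
  | cons b B ih =>
    obtain ⟨w, f⟩ := b
    rcases mem_freeEnds_cons.1 h with ⟨-, rfl⟩ | ⟨m, hm, rfl⟩
    · simp
    · have := ih hm
      simp only [flat_cons, List.length_append]
      omega

lemma pos_of_mem_freeEnds (hB : ∀ b ∈ B, b.1 ≠ []) {n : ℕ} (h : n ∈ freeEnds B) : 0 < n := by
  induction B generalizing n with
  | nil => simp [freeEnds] at h
  | cons b B ih =>
    obtain ⟨w, f⟩ := b
    have hw : 0 < w.length := List.length_pos_iff.2 (hB _ List.mem_cons_self)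
    rcases mem_freeEnds_cons.1 h with ⟨-, rfl⟩ | ⟨m, -, rfl⟩ <;> omega

lemma freeEnds_append :
    freeEnds (A ++ B) = freeEnds A ∪ (freeEnds B).map (addRightEmbedding (flat A).length) := by
  induction A with
  | nil => ext; simp [freeEnds]
  | cons a A ih =>
    obtain ⟨w, f⟩ := a
    ext n
    simp only [List.cons_append, mem_freeEnds_cons, ih, Finset.mem_union, Finset.mem_map,
      addRightEmbedding_apply, flat_cons, List.length_append]
    constructor
    · rintro (h | ⟨m, (hm | ⟨k, hk, rfl⟩), rfl⟩)
      · exact Or.inl (Or.inl h)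
      · exact Or.inl (Or.inr ⟨m, hm, rfl⟩)
      · exact Or.inr ⟨k, hk, by omega⟩
    · rintro ((h | ⟨m, hm, rfl⟩) | ⟨k, hk, rfl⟩)
      · exact Or.inl h
      · exact Or.inr ⟨m, Or.inl hm, rfl⟩
      · exact Or.inr ⟨k + (flat A).length, Or.inr ⟨k, hk, rfl⟩, by omega⟩

lemma length_flat_take_mem_freeEnds {k : ℕ} (hk : k < B.length) (hf : (B.get ⟨k, hk⟩).2 = true) :
    (flat (B.take (k + 1))).length ∈ freeEnds B := by
  induction B generalizing k with
  | nil => simp at hk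
  | cons b B ih =>
    obtain ⟨w, f⟩ := b
    rw [mem_freeEnds_cons]
    cases k with
    | zero => simp_all
    | succ k =>
      right
      refine ⟨_, ih (Nat.lt_of_succ_lt_succ hk) hf, ?_⟩
      rw [List.take_succ_cons, flat_cons, List.length_append, add_comm]

lemma card_freeEnds (hB : ∀ b ∈ B, b.1 ≠ []) : (freeEnds B).card = (B.map Prod.snd).count true := by
  induction B with
  | nil => rfl
  | cons b B ih =>
    obtain ⟨w, f⟩ := b
    have hB' : ∀ b ∈ B, b.1 ≠ [] := fun b hb => hB b (List.mem_cons_of_mem _ hb)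
    have hw : w.length ∉ (freeEnds B).map (addRightEmbedding w.length) := by
      simp only [Finset.mem_map, addRightEmbedding_apply, not_exists, not_and]
      intro m hm h
      have := pos_of_mem_freeEnds hB' hm
      omega
    rw [freeEnds, Finset.card_union_of_disjoint, Finset.card_map, ih hB']
    · cases f <;> simp [add_comm]
    · cases f <;> simp [hw]

lemma flat_consU {B : List (List Bool × Bool)} (hB : B ≠ []) : flat (consU B) = true :: flat B := by
  obtain ⟨⟨w, f⟩, B, rfl⟩ := List.exists_cons_of_ne_nil hB
  rfl

lemma freeEnds_consU (B : List (List Bool × Bool)) :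
    freeEnds (consU B) = (freeEnds B).map (addRightEmbedding 1) := by
  match B with
  | [] => rfl
  | (w, f) :: B =>
    ext n
    simp only [consU, mem_freeEnds_cons, Finset.mem_map, addRightEmbedding_apply, List.length_cons]
    constructor
    · rintro (⟨hf, rfl⟩ | ⟨m, hm, rfl⟩)
      · exact ⟨w.length, Or.inl ⟨hf, rfl⟩, rfl⟩
      · exact ⟨m + w.length, Or.inr ⟨m, hm, rfl⟩, by omega⟩
    · rintro ⟨k, ⟨hf, rfl⟩ | ⟨m, hm, rfl⟩, rfl⟩
      · exact Or.inl ⟨hf, rfl⟩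
      · exact Or.inr ⟨m, hm, by omega⟩

end Blocks

open Blocks

/-- A run of `pb`/`pbList` that starts with the waiting thresholds `D` and reads the leaf labels
`leaves` produces the blocks `B` and ends with the waiting thresholds `D'`; along the run, `P`
starts at height `D.length`. -/
structure LowerPathInv (leaves D : List ℤ) (B : List (List Bool × Bool)) (D' : List ℤ) : Prop where
  flags : B.map Prod.snd = leaves.map fun l => decide (l = -1)
  pending : D' = D.filter fun p => leaves.all (p < ·)
  ne_nil : ∀ b ∈ B, b.1 ≠ []
  excess_flat : excess (flat B) = D'.length - D.length
  zero_iff : ∀ n, 0 < n → n ≤ (flat B).length →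
    (D.length + excess ((flat B).take n) = 0 ↔ n ∈ freeEnds B)

namespace LowerPathInv

variable {leaves leaves' D D' D'' : List ℤ} {A B : List (List Bool × Bool)}

lemma nil (D : List ℤ) : LowerPathInv [] D [] D where
  flags := rfl
  pending := by simp
  ne_nil := by simp
  excess_flat := by simp
  zero_iff n hn hle := by simp at hle; omega

lemma append (hA : LowerPathInv leaves D A D') (hB : LowerPathInv leaves' D' B D'') :
    LowerPathInv (leaves ++ leaves') D (A ++ B) D'' where
  flags := by rw [List.map_append, hA.flags, hB.flags, List.map_append]
  pending := by
    rw [hB.pending, hA.pending, List.filter_filter]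
    congr 1
    funext p
    rw [List.all_append, Bool.and_comm]
  ne_nil b hb := (List.mem_append.1 hb).elim (hA.ne_nil b) (hB.ne_nil b)
  excess_flat := by rw [flat_append, excess_append, hA.excess_flat, hB.excess_flat]; ring
  zero_iff n hn hle := by
    rw [flat_append, freeEnds_append, Finset.mem_union, Finset.mem_map]
    simp only [addRightEmbedding_apply]
    rw [flat_append, List.length_append] at hle
    rcases le_or_gt n (flat A).length with hnA | hnA
    · rw [List.take_append_of_le_length hnA, hA.zero_iff n hn hnA]
      have : ¬ ∃ m ∈ freeEnds B, m + (flat A).length = n := by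
        rintro ⟨m, hm, rfl⟩
        have := pos_of_mem_freeEnds hB.ne_nil hm
        omega
      simp only [this, or_false]
    · obtain ⟨m, rfl⟩ : ∃ m, n = (flat A).length + m := ⟨n - (flat A).length, by omega⟩
      rw [List.take_length_add_append, excess_append, hA.excess_flat,
        show (D.length : ℤ) + ((D'.length : ℤ) - D.length + excess ((flat B).take m)) =
          D'.length + excess ((flat B).take m) by ring,
        hB.zero_iff m (by omega) (by omega)]
      have : m + (flat A).length ∉ freeEnds A := fun h => by
        have := le_length_of_mem_freeEnds h
        omega
      simp only [add_comm (flat A).length, add_left_inj, exists_eq_right, this, false_or]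

lemma consU {x : ℤ} (hx : ∃ y ∈ leaves, y ≤ x) (h : LowerPathInv leaves (x :: D) B D') :
    LowerPathInv leaves D (_root_.consU B) D' := by
  have hB : B ≠ [] := by
    obtain ⟨y, hy, -⟩ := hx
    rintro rfl
    have := congrArg List.length h.flags
    simp only [List.map_nil, List.length_nil, List.length_map] at this
    exact List.ne_nil_of_mem hy (List.eq_nil_of_length_eq_zero this.symm)
  obtain ⟨⟨w, f⟩, B, rfl⟩ := List.exists_cons_of_ne_nil hB
  refine ⟨by simpa [_root_.consU] using h.flags, ?_, ?_, ?_, ?_⟩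
  · obtain ⟨y, hy, hyx⟩ := hx
    have : (leaves.all fun z => decide (x < z)) = false := by
      simpa using ⟨y, hy, hyx⟩
    rw [h.pending, List.filter_cons, this, if_neg Bool.false_ne_true]
  · rintro b (_ | ⟨_, hb⟩)
    · simp
    · exact h.ne_nil b (List.mem_cons_of_mem _ hb)
  · rw [flat_consU hB, excess_cons_true, h.excess_flat, List.length_cons]
    push_cast; ring
  · intro n hn hle
    obtain ⟨j, rfl⟩ : ∃ j, n = j + 1 := ⟨n - 1, by omega⟩
    rw [flat_consU hB] at hle ⊢
    rw [List.take_succ_cons, excess_cons_true, freeEnds_consU, Finset.mem_map]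
    simp only [addRightEmbedding_apply, add_left_inj, exists_eq_right]
    rcases Nat.eq_zero_or_pos j with rfl | hj
    · simp only [List.take_zero, excess_nil, add_zero]
      exact iff_of_false (by omega) fun h0 => (pos_of_mem_freeEnds h.ne_nil h0).false
    · rw [← h.zero_iff j hj (by simpa using hle), List.length_cons]
      push_cast
      constructor <;> intro h0 <;> linarith

lemma leaf {l : ℤ} {d : ℕ} {D : List ℤ} (hD : ∀ p ∈ D, -1 ≤ p)
    (hl : l ≠ -1 → ∃ p ∈ D, p < l) :
    LowerPathInv [l] D (pb (.leaf l) d D).1 (pb (.leaf l) d D).2 := by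
  rw [pb]
  set k := (D.filter fun p => l ≤ p).length with hk
  have hsplit : k + (D.filter fun p => ¬ l ≤ p).length = D.length := by
    conv_rhs => rw [List.length_eq_length_filter_add fun p => decide (l ≤ p)]
    simp only [decide_not, hk]
  refine ⟨by simp, ?_, by simp, ?_, ?_⟩
  · simp only [List.all_cons, List.all_nil, Bool.and_true, not_le]
  · simp only [flat_cons, flat_nil, List.append_nil, excess_cons_true, excess_replicate_false]
    push_cast
    omega
  · intro n hn hle
    obtain ⟨j, rfl⟩ : ∃ j, n = j + 1 := ⟨n - 1, by omega⟩
    simp only [flat_cons, flat_nil, List.append_nil, List.length_cons, List.length_replicate] at hle ⊢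
    rw [excess_take_true_replicate_false j (k + 1) (by omega)]
    simp only [freeEnds, List.length_cons, List.length_replicate, Finset.map_empty,
      Finset.union_empty]
    have hkD : k ≤ D.length := List.length_filter_le _ _
    by_cases hfree : l = -1
    · have hkD' : k = D.length := by
        rw [hk, List.filter_eq_self.2 fun p hp => by simpa [hfree] using hD p hp]
      simp only [hfree, decide_true, if_true, Finset.mem_singleton]
      omega
    · obtain ⟨p, hp, hpl⟩ := hl hfree
      have : k < D.length := by
        rw [hk]
        exact List.length_filter_lt_length_iff_exists.2 ⟨p, hp, by simpa using hpl⟩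
      simp only [hfree, decide_false, Bool.false_eq_true, if_false, Finset.notMem_empty, iff_false]
      omega

lemma excess_take_eq_zero_iff (h : LowerPathInv leaves [] B D') {n : ℕ} (hn : 0 < n)
    (hle : n ≤ (flat B).length) : excess ((flat B).take n) = 0 ↔ n ∈ freeEnds B := by
  simpa using h.zero_iff n hn hle

lemma excess_flat_take_eq_zero (h : LowerPathInv leaves [] B D') {k : ℕ} (hk : k < B.length)
    (hf : (B.get ⟨k, hk⟩).2 = true) : excess (flat (B.take (k + 1))) = 0 := by
  have hmem := length_flat_take_mem_freeEnds hk hf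
  have hprefix : (flat B).take (flat (B.take (k + 1))).length = flat (B.take (k + 1)) := by
    have hsplit : flat B = flat (B.take (k + 1)) ++ flat (B.drop (k + 1)) := by
      rw [← flat_append, List.take_append_drop]
    rw [hsplit, List.take_left]
  rw [← hprefix, h.excess_take_eq_zero_iff (pos_of_mem_freeEnds h.ne_nil hmem)
    (le_length_of_mem_freeEnds hmem)]
  exact hmem

lemma ncontacts_flat (h : LowerPathInv leaves [] B D') :
    ncontacts (flat B) = leaves.count (-1) := by
  rw [ncontacts_eq_card (S := freeEnds B)
      (fun n hn => ⟨pos_of_mem_freeEnds h.ne_nil hn, le_length_of_mem_freeEnds hn⟩)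
      (fun n hn hle => h.excess_take_eq_zero_iff hn hle),
    card_freeEnds h.ne_nil, h.flags, List.count_eq_countP, List.count_eq_countP, List.countP_map]
  congr 1
  funext l
  by_cases hl : l = -1 <;> simp [hl]

end LowerPathInv

def PrecededByGE (c : ℤ) (leaves : List ℤ) : Prop :=
  ∀ a b, leaves = a ++ c :: b → ∀ x ∈ a, c ≤ x

/-- When a leaf `l ≥ 0` with `l ≤ c` is reached, some `p < l` of `D` is still waiting, so the leaf
does not certify all of `D`. -/
def PendingBelow (D : List ℤ) (c : ℤ) (leaves : List ℤ) : Prop :=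
  ∀ a l b, leaves = a ++ l :: b → 0 ≤ l → l ≤ c → ∃ p ∈ D, p < l ∧ ∀ x ∈ a, p < x

namespace PendingBelow

variable {D L L' : List ℤ} {c : ℤ}

lemma of_append_left (h : PendingBelow D c (L ++ L')) : PendingBelow D c L :=
  fun a l b hL => h a l (b ++ L') (by simp [hL])

lemma of_append_right (h : PendingBelow D c (L ++ L')) :
    PendingBelow (D.filter fun p => L.all (p < ·)) c L' := by
  intro a l b hL' hl hlc
  obtain ⟨p, hp, hpl, hpa⟩ := h (L ++ a) l b (by simp [hL']) hl hlc
  refine ⟨p, List.mem_filter.2 ⟨hp, ?_⟩, hpl, fun x hx => hpa x (by simp [hx])⟩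
  simpa using fun x hx => hpa x (by simp [hx])

lemma cons (h : PendingBelow D c L) (hL : PrecededByGE (c + 1) L) :
    PendingBelow (c :: D) (c + 1) L := by
  intro a l b hab hl hlc
  rcases hlc.lt_or_eq with hlc | rfl
  · obtain ⟨p, hp, hpl, hpa⟩ := h a l b hab hl (by omega)
    exact ⟨p, List.mem_cons_of_mem _ hp, hpl, hpa⟩
  · exact ⟨c, List.mem_cons_self, by omega, fun x hx => by have := hL a b hab x hx; omega⟩

lemma exists_lt {l : ℤ} (h : PendingBelow D c [l]) (hl : -1 ≤ l) (hlc : l ≤ c) :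
    l ≠ -1 → ∃ p ∈ D, p < l := fun hfree =>
  let ⟨p, hp, hpl, _⟩ := h [] l [] rfl (by omega) hlc
  ⟨p, hp, hpl⟩

end PendingBelow

lemma lowerPathInv_pbList {d : ℕ} {ts : List DTree}
    (hts : ∀ t ∈ ts, ∀ D : List ℤ, (∀ p ∈ D, -1 ≤ p) → PendingBelow D (d - 2) (leafLabels t) →
      LowerPathInv (leafLabels t) D (pb t d D).1 (pb t d D).2)
    {D : List ℤ} (hD : ∀ p ∈ D, -1 ≤ p) (hcert : PendingBelow D (d - 2) (leafLabelsList ts)) :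
    LowerPathInv (leafLabelsList ts) D (pbList ts d D).1 (pbList ts d D).2 := by
  induction ts generalizing D with
  | nil => exact LowerPathInv.nil D
  | cons t ts ih =>
    rw [leafLabelsList] at hcert ⊢
    rw [pbList]
    have ht := hts t List.mem_cons_self D hD hcert.of_append_left
    refine ht.append (ih (fun t' ht' => hts t' (List.mem_cons_of_mem _ ht')) ?_ ?_)
    · exact fun p hp => hD p (List.mem_of_mem_filter (ht.pending ▸ hp))
    · exact ht.pending ▸ hcert.of_append_right

theorem DecoAt.lowerPathInv {t : DTree} {d : ℕ} (ht : DecoAt t d) (hd : 1 ≤ d)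
    (h3 : PrecededByGE (d - 1) (leafLabels t)) {D : List ℤ} (hD : ∀ p ∈ D, -1 ≤ p)
    (hcert : PendingBelow D (d - 2) (leafLabels t)) :
    LowerPathInv (leafLabels t) D (pb t d D).1 (pb t d D).2 := by
  induction ht generalizing D with
  | @leaf l d h1 h2 =>
    rw [leafLabels] at hcert ⊢
    exact LowerPathInv.leaf hD (hcert.exists_lt h1 (by omega))
  | @node ts d _ h2 h3' _ ih =>
    rw [leafLabels] at h3 hcert ⊢
    rw [pb]
    have hcast : ((d + 1 : ℕ) : ℤ) - 2 = (d - 2 : ℤ) + 1 := by push_cast; ring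
    refine LowerPathInv.consU (h2 (by omega)) (lowerPathInv_pbList ?_ ?_ ?_)
    · intro t' ht' D' hD' hcert'
      have h3t : PrecededByGE (((d + 1 : ℕ) : ℤ) - 1) (leafLabels t') := by
        rw [Nat.cast_succ, add_sub_cancel_right]
        exact h3' t' ht'
      exact ih t' ht' (by omega) h3t hD' hcert'
    · rintro p (_ | ⟨_, hp⟩)
      · omega
      · exact hD p hp
    · rw [hcast]
      exact hcert.cons (by rwa [show (d - 2 + 1 : ℤ) = d - 1 by ring])

lemma IsDeco.lowerPathInv {T : DTree} (h : IsDeco T) :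
    ∃ D', LowerPathInv (leafLabels T) [] (blocks T) D' := by
  cases h with
  | leaf _ h2 => omega
  | @node ts _ _ _ h3 h4 =>
    refine ⟨(pbList ts 1 []).2, ?_⟩
    rw [leafLabels, blocks]
    refine lowerPathInv_pbList (fun t ht D hD hcert => (h4 t ht).lowerPathInv le_rfl ?_ hD hcert)
      (by simp) ?_
    · simpa [PrecededByGE] using h3 t ht
    · intro _ l _ _ hl hl'
      omega

theorem stmt18 (T : DTree) (h : IsDeco T) :
    (∀ k, ∀ hk : k < (blocks T).length, ((blocks T).get ⟨k, hk⟩).2 = true →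
      ((((blocks T).take (k + 1)).map Prod.fst).flatten.count true =
        (((blocks T).take (k + 1)).map Prod.fst).flatten.count false)) ∧
    fl T = ncontacts (ppath T) := by
  obtain ⟨D', hinv⟩ := h.lowerPathInv
  exact ⟨fun k hk hf => (excess_eq_zero_iff _).1 (hinv.excess_flat_take_eq_zero hk hf),
    hinv.ncontacts_flat.symm⟩
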